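/- arXiv:1809.01559 — 3 statements merged into one kernel-verified Lean document; each statement's English description precedes it below -/
import Mathlib

section
/- Let f : [0,1] → ℝ be a continuous non-negative function and let P be a real polynomial with non-negative coefficients. Suppose f satisfies the integral inequality f(τ) ≤ f(0) + ∫₀^τ f(σ)·P(f(σ)^{1/2}) dσ for all τ ∈ [0,1]. Then there exist ε > 0 and C > 1, depending only on P, such that whenever f(0) ≤ ε one has f(τ) ≤ C·f(0) for all τ ∈ [0,1]. -/
open Real Set

/-- Nonlinear Grönwall inequality on the unit interval: if a continuous
non-negative `f : [0,1] → ℝ` satisfies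
`f τ ≤ f 0 + ∫₀^τ f σ * P (√(f σ)) dσ` for a polynomial `P` with non-negative
coefficients, then for sufficiently small `f 0` one has `f τ ≤ C * f 0`,
where `ε` and `C > 1` depend only on `P`. -/
theorem nonlinear_gronwall_unit_interval (P : Polynomial ℝ)
    (hP : ∀ k, 0 ≤ P.coeff k) :
    ∃ ε > (0 : ℝ), ∃ C > (1 : ℝ), ∀ f : ℝ → ℝ,
      ContinuousOn f (Set.Icc 0 1) →
      (∀ τ ∈ Set.Icc (0:ℝ) 1, 0 ≤ f τ) →
      (∀ τ ∈ Set.Icc (0:ℝ) 1,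
        f τ ≤ f 0 + ∫ σ in (0:ℝ)..τ, f σ * P.eval (Real.sqrt (f σ))) →
      f 0 ≤ ε →
      ∀ τ ∈ Set.Icc (0:ℝ) 1, f τ ≤ C * f 0 := by
  classical
  -- P is nonneg and monotone on [0, ∞)
  have hPnn : ∀ x : ℝ, 0 ≤ x → 0 ≤ P.eval x := by
    intro x hx
    rw [Polynomial.eval_eq_sum_range]
    exact Finset.sum_nonneg fun k _ => mul_nonneg (hP k) (pow_nonneg hx k)
  have hPmono : ∀ x y : ℝ, 0 ≤ x → x ≤ y → P.eval x ≤ P.eval y := by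
    intro x y hx hxy
    rw [Polynomial.eval_eq_sum_range, Polynomial.eval_eq_sum_range]
    exact Finset.sum_le_sum fun k _ =>
      mul_le_mul_of_nonneg_left (pow_le_pow_left₀ hx hxy k) (hP k)
  set K : ℝ := P.eval 1 with hKdef
  have hK0 : 0 ≤ K := hPnn 1 zero_le_one
  set C : ℝ := Real.exp K + 1 with hCdef
  have hexpK : Real.exp K ≤ C := by simp [hCdef]
  have hCgt : 1 < C := by
    have := Real.one_le_exp hK0
    simp only [hCdef]; linarith
  have hCpos : 0 < C := by linarith
  refine ⟨1 / (2 * C), by positivity, C, hCgt, ?_⟩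
  intro f hfc hfnn hint hsmall
  have hf00 : 0 ≤ f 0 := hfnn 0 ⟨le_refl _, zero_le_one⟩
  -- extend f continuously to all of ℝ
  set u : ℝ → ℝ := fun t => max 0 (min t 1) with hudef
  have hu_mem : ∀ t, u t ∈ Icc (0:ℝ) 1 := fun t =>
    ⟨le_max_left _ _, max_le (by norm_num) (min_le_right _ _)⟩
  have hu_of : ∀ t ∈ Icc (0:ℝ) 1, u t = t := fun t ht => by
    simp [hudef, min_eq_left ht.2, max_eq_right ht.1]
  set h : ℝ → ℝ := fun t => f (u t) with hhdef
  have hh_cont : Continuous h :=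
    hfc.comp_continuous (continuous_const.max (continuous_id.min continuous_const)) hu_mem
  have hh_nn : ∀ t, 0 ≤ h t := fun t => hfnn _ (hu_mem t)
  have hh_eq : ∀ t ∈ Icc (0:ℝ) 1, h t = f t := fun t ht => by rw [hhdef]; simp [hu_of t ht]
  set φ : ℝ → ℝ := fun σ => h σ * P.eval (Real.sqrt (h σ)) with hφdef
  have hφc : Continuous φ :=
    hh_cont.mul (P.continuous.comp (Real.continuous_sqrt.comp hh_cont))
  have hφnn : ∀ t, 0 ≤ φ t := fun t =>
    mul_nonneg (hh_nn t) (hPnn _ (Real.sqrt_nonneg _))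
  set g : ℝ → ℝ := fun t => f 0 + ∫ σ in (0:ℝ)..t, φ σ with hgdef
  have hg_deriv : ∀ t, HasDerivAt g (φ t) t := fun t =>
    ((hφc.integral_hasStrictDerivAt 0 t).hasDerivAt).const_add (f 0)
  have hg_cont : Continuous g := by
    rw [continuous_iff_continuousAt]; exact fun t => (hg_deriv t).continuousAt
  have hg_mono : Monotone g := by
    apply monotone_of_deriv_nonneg (fun t => (hg_deriv t).differentiableAt)
    intro t; rw [(hg_deriv t).deriv]; exact hφnn t
  have hg0 : g 0 = f 0 := by simp [hgdef]
  -- f ≤ g on [0,1]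
  have hfg : ∀ τ ∈ Icc (0:ℝ) 1, f τ ≤ g τ := by
    intro τ hτ
    have hcongr : (∫ σ in (0:ℝ)..τ, f σ * P.eval (Real.sqrt (f σ))) = ∫ σ in (0:ℝ)..τ, φ σ := by
      apply intervalIntegral.integral_congr
      intro σ hσ
      rw [Set.uIcc_of_le hτ.1] at hσ
      have hσ1 : σ ∈ Icc (0:ℝ) 1 := ⟨hσ.1, hσ.2.trans hτ.2⟩
      simp [hφdef, hh_eq σ hσ1]
    have := hint τ hτ
    rw [hcongr] at this
    exact this
  -- bootstrap set
  set S : Set ℝ := Icc (0:ℝ) 1 ∩ g ⁻¹' (Iic 1) with hSdef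
  have hεle : f 0 ≤ 1 / 2 := by
    refine hsmall.trans ?_
    rw [div_le_div_iff₀ (by positivity) (by norm_num)]
    linarith
  have hS0 : (0:ℝ) ∈ S := by
    refine ⟨⟨le_refl _, zero_le_one⟩, ?_⟩
    simp only [Set.mem_preimage, Set.mem_Iic, hg0]
    linarith
  have hSne : S.Nonempty := ⟨0, hS0⟩
  have hSbdd : BddAbove S := bddAbove_Icc.mono (Set.inter_subset_left)
  have hSclosed : IsClosed S := isClosed_Icc.inter (isClosed_Iic.preimage hg_cont)
  set T : ℝ := sSup S with hTdef
  have hTS : T ∈ S := hSclosed.csSup_mem hSne hSbdd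
  have hT01 : T ∈ Icc (0:ℝ) 1 := hTS.1
  have hgT : g T ≤ 1 := hTS.2
  -- Grönwall on [0, T]
  have gron : ∀ t ∈ Icc (0:ℝ) T, g t ≤ f 0 * Real.exp (K * t) := by
    intro t ht
    have key := norm_le_gronwallBound_of_norm_deriv_right_le
      (f := g) (f' := φ) (δ := f 0) (K := K) (ε := 0) (a := 0) (b := T)
      hg_cont.continuousOn
      (fun x _ => (hg_deriv x).hasDerivWithinAt)
      (by rw [hg0, Real.norm_of_nonneg hf00])
      ?_ t ht
    · rw [Real.norm_eq_abs] at key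
      calc g t ≤ |g t| := le_abs_self _
        _ ≤ gronwallBound (f 0) K 0 (t - 0) := key
        _ = f 0 * Real.exp (K * t) := by rw [sub_zero, gronwallBound_ε0]
    · intro x hx
      have hx01 : x ∈ Icc (0:ℝ) 1 := ⟨hx.1, (hx.2.le).trans hT01.2⟩
      have hgx : g x ≤ 1 := (hg_mono hx.2.le).trans hgT
      have hhx : h x ≤ g x := by rw [hh_eq x hx01]; exact hfg x hx01
      have hhx1 : h x ≤ 1 := hhx.trans hgx
      have hsq : Real.sqrt (h x) ≤ 1 := by
        rw [show (1:ℝ) = Real.sqrt 1 by simp]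
        exact Real.sqrt_le_sqrt hhx1
      have hPle : P.eval (Real.sqrt (h x)) ≤ K := hPmono _ _ (Real.sqrt_nonneg _) hsq
      have hgx0 : 0 ≤ g x := (hh_nn x).trans hhx
      have : φ x ≤ K * g x := by
        calc φ x = h x * P.eval (Real.sqrt (h x)) := rfl
          _ ≤ g x * K :=
            mul_le_mul hhx hPle (hPnn _ (Real.sqrt_nonneg _)) hgx0
          _ = K * g x := mul_comm _ _
      rw [Real.norm_of_nonneg (hφnn x), Real.norm_of_nonneg hgx0, add_zero]
      exact this
  -- T = 1
  have hT1 : T = 1 := by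
    by_contra hne
    have hTlt : T < 1 := lt_of_le_of_ne hT01.2 hne
    have hgThalf : g T ≤ 1 / 2 := by
      have := gron T ⟨hT01.1, le_refl _⟩
      calc g T ≤ f 0 * Real.exp (K * T) := this
        _ ≤ (1 / (2 * C)) * C := by
            apply mul_le_mul hsmall ?_ (Real.exp_nonneg _) (by positivity)
            refine (Real.exp_le_exp.mpr ?_).trans hexpK
            nlinarith [hT01.1, hT01.2, hK0]
        _ = 1 / 2 := by field_simp
    have hev : ∀ᶠ t in nhds T, g t < 1 := by
      have : ContinuousAt g T := hg_cont.continuousAt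
      exact this.eventually_lt continuousAt_const (hgThalf.trans_lt (by norm_num))
    rw [Metric.eventually_nhds_iff] at hev
    obtain ⟨δ, hδ, hball⟩ := hev
    set t' : ℝ := min 1 (T + δ / 2) with ht'def
    have hTt' : T < t' := lt_min hTlt (by linarith)
    have ht'S : t' ∈ S := by
      refine ⟨⟨hT01.1.trans hTt'.le, min_le_left _ _⟩, ?_⟩
      have : dist t' T < δ := by
        rw [Real.dist_eq, abs_of_nonneg (by linarith)]
        have : t' ≤ T + δ / 2 := min_le_right _ _
        linarith
      exact le_of_lt (hball this)
    have := le_csSup hSbdd ht'S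
    rw [← hTdef] at this
    linarith
  -- conclude
  intro τ hτ
  have hτT : τ ∈ Icc (0:ℝ) T := by rw [hT1]; exact hτ
  calc f τ ≤ g τ := hfg τ hτ
    _ ≤ f 0 * Real.exp (K * τ) := gron τ hτT
    _ ≤ f 0 * C := by
        apply mul_le_mul_of_nonneg_left _ hf00
        refine (Real.exp_le_exp.mpr ?_).trans hexpK
        nlinarith [hτ.1, hτ.2, hK0]
    _ = C * f 0 := mul_comm _ _
end

section
/- Let r > 0, let f : [0,r] → ℝ be a continuous non-negative function and let P be a real polynomial with non-negative coefficients. Suppose f satisfies f(τ) ≤ f(0) + ∫₀^τ f(σ)·P(f(σ)^{1/2}) dσ for all τ ∈ [0,r]. Then there exist ε > 0 and C > 1, depending only on P and r, such that whenever f(0) ≤ ε one has f(τ) ≤ C·f(0) for all τ ∈ [0,r]. -/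
/-!
Put `K = P(1)`. While `f ≤ 1` we have `P(√f) ≤ K`, so the inequality is linear there:
`f τ ≤ f 0 + K ∫₀^τ f`. For `a > f 0` with `a e^{K r} ≤ 1`, the curve `a e^{K τ}` is a strict
barrier: up to a first touching time `t` it keeps `f ≤ 1`, hence
`f t ≤ f 0 + a (e^{K t} - 1) < a e^{K t}`, a contradiction. Letting `a ↓ f 0` gives
`f τ ≤ f 0 e^{K τ}`, so `ε = e^{-K r} / 2` and `C = e^{K r} + 1` work.
-/

open Real Set Filter Topology intervalIntegral

namespace Polynomial

variable {R : Type*} [Semiring R] [PartialOrder R] [IsOrderedRing R] {p : R[X]}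

lemma eval_nonneg_of_coeff_nonneg (hp : ∀ k, 0 ≤ p.coeff k) {x : R} (hx : 0 ≤ x) :
    0 ≤ p.eval x := by
  rw [eval_eq_sum_range]
  exact Finset.sum_nonneg fun k _ => mul_nonneg (hp k) (pow_nonneg hx k)

lemma eval_le_eval_of_coeff_nonneg (hp : ∀ k, 0 ≤ p.coeff k) {x y : R} (hx : 0 ≤ x)
    (hxy : x ≤ y) : p.eval x ≤ p.eval y := by
  rw [eval_eq_sum_range, eval_eq_sum_range]
  exact Finset.sum_le_sum fun k _ =>
    mul_le_mul_of_nonneg_left (pow_le_pow_left₀ hx hxy k) (hp k)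

lemma mul_eval_sqrt_le_eval_one_mul {P : ℝ[X]} (hP : ∀ k, 0 ≤ P.coeff k) {x : ℝ} (hx₀ : 0 ≤ x)
    (hx₁ : x ≤ 1) : x * P.eval (√x) ≤ P.eval 1 * x := by
  rw [mul_comm]
  exact mul_le_mul_of_nonneg_right (P.eval_le_eval_of_coeff_nonneg hP (sqrt_nonneg x)
    (sqrt_le_one.mpr hx₁)) hx₀

end Polynomial

lemma le_on_Icc_of_forall_le_on_Icc_imp_lt {α β : Type*} [ConditionallyCompleteLinearOrder α]
    [TopologicalSpace α] [OrderTopology α] [DenselyOrdered α] [LinearOrder β]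
    [TopologicalSpace β] [OrderClosedTopology β] {f g : α → β} {a b : α}
    (hf : ContinuousOn f (Icc a b)) (hg : ContinuousOn g (Icc a b)) (ha : f a ≤ g a)
    (hstep : ∀ t ∈ Ico a b, (∀ s ∈ Icc a t, f s ≤ g s) → f t < g t) :
    ∀ t ∈ Icc a b, f t ≤ g t := by
  have hclosed : IsClosed ({t | f t ≤ g t} ∩ Icc a b) := by
    rw [inter_comm]; exact isClosed_Icc.isClosed_le hf hg
  refine fun t ht => hclosed.Icc_subset_of_forall_mem_nhdsGT_of_Icc_subset ha
    (fun t ht hle => ?_) ht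
  have hnhds : Icc a b ∈ 𝓝[>] t := Icc_mem_nhdsGT_of_mem ht
  have hlim := ((hf t (Ico_subset_Icc_self ht)).mono_of_mem_nhdsWithin hnhds).eventually_lt
    ((hg t (Ico_subset_Icc_self ht)).mono_of_mem_nhdsWithin hnhds) (hstep t ht hle)
  exact hlim.mono fun s hs => hs.le

lemma integral_mul_exp_mul (c a t : ℝ) :
    ∫ s in (0:ℝ)..t, c * (a * exp (c * s)) = a * exp (c * t) - a := by
  have hderiv : ∀ s ∈ uIcc 0 t,
      HasDerivAt (fun s => a * exp (c * s)) (c * (a * exp (c * s))) s := fun s _ => by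
    have := ((hasDerivAt_id s).const_mul c).exp.const_mul a
    simp only [id, mul_one] at this
    rwa [show c * (a * exp (c * s)) = a * (exp (c * s) * c) by ring]
  rw [integral_eq_sub_of_hasDerivAt hderiv (Continuous.intervalIntegrable (by fun_prop) _ _),
    mul_zero, exp_zero, mul_one]

section NonlinearGronwall

variable {P : Polynomial ℝ} (hP : ∀ k, 0 ≤ P.coeff k) {r : ℝ} {f : ℝ → ℝ}
  (hf : ContinuousOn f (Icc 0 r)) (hf₀ : ∀ τ ∈ Icc (0:ℝ) r, 0 ≤ f τ)
  (hineq : ∀ τ ∈ Icc (0:ℝ) r,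
    f τ ≤ f 0 + ∫ σ in (0:ℝ)..τ, f σ * P.eval (√(f σ)))
include hP hf hf₀ hineq

lemma le_mul_exp_of_lt_of_mul_exp_le_one {a : ℝ} (ha : f 0 < a)
    (ha₁ : a * exp (P.eval 1 * r) ≤ 1) :
    ∀ τ ∈ Icc (0:ℝ) r, f τ ≤ a * exp (P.eval 1 * τ) := by
  set K := P.eval 1
  have hK : 0 ≤ K := P.eval_nonneg_of_coeff_nonneg hP zero_le_one
  refine le_on_Icc_of_forall_le_on_Icc_imp_lt hf (by fun_prop) (by simpa using ha.le) ?_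
  intro t ht hle
  have hsub : Icc 0 t ⊆ Icc 0 r := Icc_subset_Icc_right ht.2.le
  have ha₀ : 0 ≤ a := (hf₀ 0 ⟨le_rfl, ht.1.trans ht.2.le⟩).trans ha.le
  have hbound : ∀ s ∈ Icc 0 t, f s * P.eval (√(f s)) ≤ K * (a * exp (K * s)) := by
    intro s hs
    have hfs₁ : f s ≤ 1 := calc
      f s ≤ a * exp (K * s) := hle s hs
      _ ≤ a * exp (K * r) := by gcongr; exact (hsub hs).2
      _ ≤ 1 := ha₁
    calc f s * P.eval (√(f s)) ≤ K * f s :=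
          P.mul_eval_sqrt_le_eval_one_mul hP (hf₀ s (hsub hs)) hfs₁
      _ ≤ K * (a * exp (K * s)) := mul_le_mul_of_nonneg_left (hle s hs) hK
  have hint :
      IntervalIntegrable (fun σ => f σ * P.eval (√(f σ))) MeasureTheory.volume 0 t := by
    refine ContinuousOn.intervalIntegrable ?_
    rw [uIcc_of_le ht.1]
    exact (hf.mul ((P.continuous.comp continuous_sqrt).comp_continuousOn hf)).mono hsub
  calc f t ≤ f 0 + ∫ σ in (0:ℝ)..t, f σ * P.eval (√(f σ)) :=
        hineq t (Ico_subset_Icc_self ht)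
    _ ≤ f 0 + ∫ σ in (0:ℝ)..t, K * (a * exp (K * σ)) := by
        gcongr
        exact integral_mono_on ht.1 hint
          (Continuous.intervalIntegrable (by fun_prop) _ _) hbound
    _ = f 0 + (a * exp (K * t) - a) := by rw [integral_mul_exp_mul]
    _ < a * exp (K * t) := by linarith

lemma le_mul_exp_of_lt_exp_neg (h : f 0 < exp (-(P.eval 1 * r))) :
    ∀ τ ∈ Icc (0:ℝ) r, f τ ≤ f 0 * exp (P.eval 1 * τ) := by
  intro τ hτ
  have hlim : Tendsto (fun a => a * exp (P.eval 1 * τ)) (𝓝[>] (f 0))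
      (𝓝 (f 0 * exp (P.eval 1 * τ))) :=
    ((continuous_id.mul continuous_const).tendsto _).mono_left nhdsWithin_le_nhds
  refine ge_of_tendsto hlim ?_
  filter_upwards [Ioo_mem_nhdsGT h] with a ha
  refine le_mul_exp_of_lt_of_mul_exp_le_one hP hf hf₀ hineq ha.1 ?_ τ hτ
  calc a * exp (P.eval 1 * r) ≤ exp (-(P.eval 1 * r)) * exp (P.eval 1 * r) := by
        gcongr; exact ha.2.le
    _ = 1 := by rw [← exp_add, neg_add_cancel, exp_zero]

end NonlinearGronwall

theorem nonlinear_gronwall_compact_interval_general (P : Polynomial ℝ)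
    (hP : ∀ k, 0 ≤ P.coeff k) (r : ℝ) :
    ∃ ε > (0 : ℝ), ∃ C > (1 : ℝ), ∀ f : ℝ → ℝ,
      ContinuousOn f (Set.Icc 0 r) →
      (∀ τ ∈ Set.Icc (0:ℝ) r, 0 ≤ f τ) →
      (∀ τ ∈ Set.Icc (0:ℝ) r,
        f τ ≤ f 0 + ∫ σ in (0:ℝ)..τ, f σ * P.eval (Real.sqrt (f σ))) →
      f 0 ≤ ε →
      ∀ τ ∈ Set.Icc (0:ℝ) r, f τ ≤ C * f 0 := by
  set K := P.eval 1
  have hK : 0 ≤ K := P.eval_nonneg_of_coeff_nonneg hP zero_le_one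
  refine ⟨exp (-(K * r)) / 2, by positivity, exp (K * r) + 1, by linarith [exp_pos (K * r)],
    fun f hf hf₀ hineq hε τ hτ => ?_⟩
  have hf₀0 : 0 ≤ f 0 := hf₀ 0 ⟨le_rfl, hτ.1.trans hτ.2⟩
  calc f τ ≤ f 0 * exp (K * τ) :=
        le_mul_exp_of_lt_exp_neg hP hf hf₀ hineq (by linarith [exp_pos (-(K * r))]) τ hτ
    _ ≤ f 0 * exp (K * r) := by gcongr; exact hτ.2
    _ ≤ (exp (K * r) + 1) * f 0 := by nlinarith

/-- Nonlinear Grönwall inequality on an arbitrary compact interval `[0,r]`: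
if a continuous non-negative `f : [0,r] → ℝ` satisfies
`f τ ≤ f 0 + ∫₀^τ f σ * P (√(f σ)) dσ` for a polynomial `P` with non-negative
coefficients, then for sufficiently small `f 0` one has `f τ ≤ C * f 0`,
where `ε` and `C > 1` depend only on `P` and `r`. -/
theorem nonlinear_gronwall_compact_interval (P : Polynomial ℝ)
    (hP : ∀ k, 0 ≤ P.coeff k) (r : ℝ) (hr : 0 < r) :
    ∃ ε > (0 : ℝ), ∃ C > (1 : ℝ), ∀ f : ℝ → ℝ,
      ContinuousOn f (Set.Icc 0 r) →
      (∀ τ ∈ Set.Icc (0:ℝ) r, 0 ≤ f τ) →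
      (∀ τ ∈ Set.Icc (0:ℝ) r,
        f τ ≤ f 0 + ∫ σ in (0:ℝ)..τ, f σ * P.eval (Real.sqrt (f σ))) →
      f 0 ≤ ε →
      ∀ τ ∈ Set.Icc (0:ℝ) r, f τ ≤ C * f 0 :=
  nonlinear_gronwall_compact_interval_general P hP r
end

section
/- Let H > 0 and define Φ : ℝ × (0, 1/H) → ℝ by Φ(t,r) = e^{−Ht}·(1 − H²r²)^{−1/2}. Then for all t ∈ ℝ and 0 < r < 1/H, Φ satisfies (1 − H²r²)^{−1}·∂²_t Φ(t,r) − (1/r)·∂_r( r·(1 − H²r²)·∂_r Φ(t,r) ) + 2H²·Φ(t,r) = H²·Φ(t,r). -/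
/-!
With `F = 1 - H²r²`, the mode separates as `e^{-Ht} F^{-1/2}`. The time part gives `H² Φ / F`.
In the radial part the flux simplifies, `ρ F ∂_ρ F^{-1/2} = H² ρ² F^{-1/2}`, so it gives
`-(2H² + H⁴r²/F) Φ`. Adding `2H² Φ` leaves `H² (1 - H²r²) Φ / F = H² Φ`.
-/

open Filter Topology

lemma deriv_deriv_exp_neg_mul_mul (H c t : ℝ) :
    deriv (fun s => deriv (fun s' => Real.exp (-(H * s')) * c) s) t
      = H ^ 2 * (Real.exp (-(H * t)) * c) := by
  have hfirst : ∀ s, HasDerivAt (fun s' => Real.exp (-(H * s')) * c)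
      (-H * (Real.exp (-(H * s)) * c)) s := fun s => by
    have := (((hasDerivAt_id s).const_mul H).neg.exp).mul_const c
    exact this.congr_deriv (by simp; ring)
  simp only [fun s => (hfirst s).deriv]
  rw [((hfirst t).const_mul (-H)).deriv]
  ring

lemma hasDerivAt_one_sub_mul_sq_rpow_neg_half {k x : ℝ} (hx : 0 < 1 - k * x ^ 2) :
    HasDerivAt (fun ρ => (1 - k * ρ ^ 2) ^ (-(1 / 2) : ℝ))
      (k * x * (1 - k * x ^ 2) ^ (-(1 / 2) : ℝ) / (1 - k * x ^ 2)) x := by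
  have hinner : HasDerivAt (fun ρ => 1 - k * ρ ^ 2) (-(2 * k * x)) x := by
    simpa using (((hasDerivAt_pow 2 x).const_mul k).const_sub 1).congr_deriv (by ring)
  have := (Real.hasDerivAt_rpow_const (p := -(1 / 2)) (Or.inl hx.ne')).comp x hinner
  refine this.congr_deriv ?_
  rw [Real.rpow_sub_one hx.ne']
  ring

lemma radial_flux_eventuallyEq {k c r : ℝ} (hr : 0 < 1 - k * r ^ 2) :
    (fun ρ => ρ * (1 - k * ρ ^ 2) * deriv (fun ρ => c * (1 - k * ρ ^ 2) ^ (-(1 / 2) : ℝ)) ρ)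
      =ᶠ[𝓝 r] fun ρ => c * k * ρ ^ 2 * (1 - k * ρ ^ 2) ^ (-(1 / 2) : ℝ) := by
  have hpos : ∀ᶠ ρ in 𝓝 r, 0 < 1 - k * ρ ^ 2 :=
    continuousAt_const.eventually_lt (f := fun _ => (0 : ℝ)) (by fun_prop) hr
  filter_upwards [hpos] with ρ hρ
  rw [((hasDerivAt_one_sub_mul_sq_rpow_neg_half hρ).const_mul c).deriv]
  generalize 1 - k * ρ ^ 2 = F at hρ ⊢
  field_simp [hρ.ne']

lemma hasDerivAt_mul_sq_mul_rpow_neg_half {k x : ℝ} (c : ℝ) (hx : 0 < 1 - k * x ^ 2) :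
    HasDerivAt (fun ρ => c * ρ ^ 2 * (1 - k * ρ ^ 2) ^ (-(1 / 2) : ℝ))
      (c * (2 * x + k * x ^ 3 / (1 - k * x ^ 2)) * (1 - k * x ^ 2) ^ (-(1 / 2) : ℝ)) x := by
  have := (((hasDerivAt_pow 2 x).const_mul c).mul (hasDerivAt_one_sub_mul_sq_rpow_neg_half hx))
  exact this.congr_deriv (by push_cast; ring)

theorem eigenmode_conformal_wave_operator_general (H : ℝ) (Φ : ℝ → ℝ → ℝ)
    (hΦ : ∀ t r, Φ t r = Real.exp (-(H * t)) * (1 - H^2 * r^2) ^ (-(1/2) : ℝ)) :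
    ∀ t r : ℝ, 0 < r → r < 1/H →
      (1 - H^2 * r^2)⁻¹ * deriv (fun s => deriv (fun s' => Φ s' r) s) t
        - (1/r) * deriv (fun ρ => ρ * (1 - H^2 * ρ^2) * deriv (Φ t) ρ) r
        + 2 * H^2 * Φ t r
      = H^2 * Φ t r := by
  intro t r hr hrH
  obtain rfl : Φ = fun t r => Real.exp (-(H * t)) * (1 - H^2 * r^2) ^ (-(1/2) : ℝ) :=
    funext₂ hΦ
  have hH : 0 < H := one_div_pos.mp (hr.trans hrH)
  have hF : 0 < 1 - H ^ 2 * r ^ 2 := by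
    have : r * H < 1 := (lt_div_iff₀ hH).mp hrH
    nlinarith [mul_pos hH hr]
  rw [deriv_deriv_exp_neg_mul_mul, (radial_flux_eventuallyEq hF).deriv_eq,
    (hasDerivAt_mul_sq_mul_rpow_neg_half _ hF).deriv]
  field_simp
  ring

/-- `Φ₁(t,r) = e^{-Ht}·(1 − H²r²)^{-1/2}` is an eigenfunction with eigenvalue
`H²` of the uncharged spherically symmetric conformally invariant wave
operator `F(r)⁻¹ ∂ₜ² − (1/r) ∂ᵣ(r F(r) ∂ᵣ) + 2H²` on de Sitter space in
static coordinates, where `F(r) = 1 − H²r²`. -/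
theorem eigenmode_conformal_wave_operator (H : ℝ) (hH : 0 < H) (Φ : ℝ → ℝ → ℝ)
    (hΦ : ∀ t r, Φ t r = Real.exp (-(H * t)) * (1 - H^2 * r^2) ^ (-(1/2) : ℝ)) :
    ∀ t r : ℝ, 0 < r → r < 1/H →
      (1 - H^2 * r^2)⁻¹ * deriv (fun s => deriv (fun s' => Φ s' r) s) t
        - (1/r) * deriv (fun ρ => ρ * (1 - H^2 * ρ^2) * deriv (Φ t) ρ) r
        + 2 * H^2 * Φ t r
      = H^2 * Φ t r :=
  eigenmode_conformal_wave_operator_general H Φ hΦ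
end
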